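/- arXiv:2207.02669 — 5 statements merged into one kernel-verified Lean document; each statement's English description precedes it below -/
import Mathlib

section
/- Let G be a graph, W ⊆ V(G) with |W| ≥ ν, and Z a set of κ vertices dominating W (W ⊆ N[Z]). Then the vertices of Z can be ordered z₁,…,z_κ so that for some m ≤ κ the sequence (z₁,…,z_m) is a pseudo-cover of W with parameters κ, λ = 1/κ, μ = 2κ², ν = 2κ³. -/
/-!
Greedy choice. As long as more than `ν = κ μ` vertices of `W` are uncovered, they are
dominated by the `κ` vertices of `Z`, so by pigeonhole some `z ∈ Z` covers at least a
`1/κ` fraction of them, hence more than `μ`; such a `z` has not been chosen before, because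
chosen vertices cover nothing that is still uncovered. So the process stops after at most
`κ` steps, and appending the unused vertices of `Z` gives the required ordering.
-/

variable {V : Type*} [Fintype V] [DecidableEq V]

/-- The closed neighborhood of `v` as a finset. -/
def closedNbr (G : SimpleGraph V) [DecidableRel G.Adj] (v : V) : Finset V :=
  insert v (G.neighborFinset v)

/-- The elements of `W` not covered by the closed neighborhoods of the
vertices in the list `l`. -/
def uncovered (G : SimpleGraph V) [DecidableRel G.Adj] (W : Finset V)
    (l : List V) : Finset V :=
  W.filter fun w => ∀ v ∈ l, w ∉ closedNbr G v

/-- A pseudo-cover of `W` with parameters `(κ, λ = 1/κ, μ, ν)`: a sequence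
`(v₁, …, v_m)` with `m ≤ κ` such that each `vᵢ` is `1/κ`-strong for the part of
`W` not yet covered and covers at least `μ` of its elements, and at most `ν`
elements of `W` remain uncovered at the end. -/
def IsPseudoCover (G : SimpleGraph V) [DecidableRel G.Adj]
    (κ μ ν : ℕ) (W : Finset V) (l : List V) : Prop :=
  l.length ≤ κ ∧
  (∀ i : Fin l.length,
      (uncovered G W (l.take i.1)).card ≤
        κ * (closedNbr G (l.get i) ∩ uncovered G W (l.take i.1)).card ∧
      μ ≤ (closedNbr G (l.get i) ∩ uncovered G W (l.take i.1)).card) ∧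
  (uncovered G W l).card ≤ ν

theorem Finset.exists_card_le_mul_card_inter {ι α : Type*} [DecidableEq α]
    {S : Finset ι} {U : Finset α} (t : ι → Finset α) (hS : S.Nonempty)
    (hU : ∀ u ∈ U, ∃ s ∈ S, u ∈ t s) :
    ∃ s ∈ S, U.card ≤ S.card * (t s ∩ U).card := by
  obtain ⟨s, hs, hmax⟩ := S.exists_max_image (fun s => (t s ∩ U).card) hS
  refine ⟨s, hs, ?_⟩
  have hcover : U ⊆ S.biUnion fun s => t s ∩ U := fun u hu => by
    obtain ⟨s', hs', hus'⟩ := hU u hu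
    exact Finset.mem_biUnion.2 ⟨s', hs', Finset.mem_inter.2 ⟨hus', hu⟩⟩
  calc U.card ≤ (S.biUnion fun s => t s ∩ U).card := Finset.card_le_card hcover
    _ ≤ ∑ s' ∈ S, (t s' ∩ U).card := Finset.card_biUnion_le
    _ ≤ ∑ _s' ∈ S, (t s ∩ U).card := Finset.sum_le_sum hmax
    _ = S.card * (t s ∩ U).card := by rw [Finset.sum_const, smul_eq_mul]

theorem List.forall_take_get_append_singleton {α : Type*} (P : List α → α → Prop)
    {l : List α} {a : α} (hl : ∀ i : Fin l.length, P (l.take i) (l.get i)) (ha : P l a) :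
    ∀ i : Fin (l ++ [a]).length, P ((l ++ [a]).take i) ((l ++ [a]).get i) := by
  rintro ⟨i, hi⟩
  rw [List.length_append, List.length_singleton] at hi
  rcases Nat.lt_or_ge i l.length with hil | hil
  · simpa [List.take_append_of_le_length hil.le, List.getElem_append_left hil] using
      hl ⟨i, hil⟩
  · obtain rfl : i = l.length := by omega
    simpa using ha

theorem List.exists_nodup_toFinset_eq_take_length {α : Type*} [DecidableEq α]
    {l : List α} {Z : Finset α} (hl : l.Nodup) (hlZ : l.toFinset ⊆ Z) :
    ∃ L : List α, L.Nodup ∧ L.toFinset = Z ∧ L.take l.length = l := by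
  refine ⟨l ++ (Z \ l.toFinset).toList, ?_, ?_, List.take_left⟩
  · refine List.nodup_append.2 ⟨hl, Finset.nodup_toList _, fun a ha b hb => ?_⟩
    rintro rfl
    exact (Finset.mem_sdiff.1 (Finset.mem_toList.1 hb)).2 (List.mem_toFinset.2 ha)
  · rw [List.toFinset_append, Finset.toList_toFinset, Finset.union_sdiff_of_subset hlZ]

theorem List.length_le_card_of_toFinset_subset {α : Type*} [DecidableEq α]
    {l : List α} {Z : Finset α} (hl : l.Nodup) (hlZ : l.toFinset ⊆ Z) : l.length ≤ Z.card :=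
  List.toFinset_card_of_nodup hl ▸ Finset.card_le_card hlZ

section PseudoCover

variable (G : SimpleGraph V) [DecidableRel G.Adj]

theorem mem_closedNbr {v w : V} : w ∈ closedNbr G v ↔ v = w ∨ G.Adj v w := by
  rw [closedNbr, Finset.mem_insert, SimpleGraph.mem_neighborFinset, eq_comm]

theorem closedNbr_inter_uncovered_of_mem {W : Finset V} {l : List V} {v : V} (hv : v ∈ l) :
    closedNbr G v ∩ uncovered G W l = ∅ :=
  Finset.eq_empty_of_forall_notMem fun _ hw =>
    (Finset.mem_filter.1 (Finset.mem_inter.1 hw).2).2 v hv (Finset.mem_inter.1 hw).1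

/-- The condition on the `i`-th vertex `v` of a pseudo-cover, `l` being the vertices before it. -/
def IsStrongStep (κ μ : ℕ) (W : Finset V) (l : List V) (v : V) : Prop :=
  (uncovered G W l).card ≤ κ * (closedNbr G v ∩ uncovered G W l).card ∧
    μ ≤ (closedNbr G v ∩ uncovered G W l).card

variable {G} {κ μ ν : ℕ} {W Z : Finset V}

theorem exists_isStrongStep_of_lt_card_uncovered (hZ : Z.card ≤ κ) (hμν : κ * μ ≤ ν)
    (hdom : ∀ w ∈ W, ∃ z ∈ Z, w ∈ closedNbr G z) {l : List V}
    (hl : ν < (uncovered G W l).card) :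
    ∃ z ∈ Z, z ∉ l ∧ IsStrongStep G κ μ W l z := by
  set U := uncovered G W l
  have hU : ∀ u ∈ U, ∃ z ∈ Z, u ∈ closedNbr G z := fun u hu =>
    hdom u (Finset.filter_subset _ _ hu)
  obtain ⟨u, hu⟩ : U.Nonempty := Finset.card_pos.1 (by omega)
  obtain ⟨z₀, hz₀, -⟩ := hU u hu
  obtain ⟨z, hz, hcard⟩ :=
    Finset.exists_card_le_mul_card_inter (closedNbr G) ⟨z₀, hz₀⟩ hU
  have hstrong : U.card ≤ κ * (closedNbr G z ∩ U).card :=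
    hcard.trans (Nat.mul_le_mul_right _ hZ)
  have hμ : μ < (closedNbr G z ∩ U).card := Nat.lt_of_mul_lt_mul_left (a := κ) (by omega)
  refine ⟨z, hz, fun hzl => ?_, hstrong, hμ.le⟩
  rw [closedNbr_inter_uncovered_of_mem G hzl] at hμ
  exact Nat.not_lt_zero _ hμ

theorem exists_strong_sequence_card_uncovered_le (hZ : Z.card ≤ κ) (hμν : κ * μ ≤ ν)
    (hdom : ∀ w ∈ W, ∃ z ∈ Z, w ∈ closedNbr G z) (l : List V) (hl : l.Nodup)
    (hlZ : l.toFinset ⊆ Z)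
    (hstrong : ∀ i : Fin l.length, IsStrongStep G κ μ W (l.take i) (l.get i)) :
    ∃ l' : List V, l'.Nodup ∧ l'.toFinset ⊆ Z ∧
      (∀ i : Fin l'.length, IsStrongStep G κ μ W (l'.take i) (l'.get i)) ∧
      (uncovered G W l').card ≤ ν := by
  by_cases hsmall : (uncovered G W l).card ≤ ν
  · exact ⟨l, hl, hlZ, hstrong, hsmall⟩
  obtain ⟨z, hz, hzl, hzstep⟩ :=
    exists_isStrongStep_of_lt_card_uncovered hZ hμν hdom (not_le.1 hsmall)
  have hl' : (l ++ [z]).Nodup := List.nodup_append.2 ⟨hl, List.nodup_singleton z,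
    fun a ha b hb => by rintro rfl; exact hzl (List.mem_singleton.1 hb ▸ ha)⟩
  have hlZ' : (l ++ [z]).toFinset ⊆ Z := by
    rw [List.toFinset_append]
    exact Finset.union_subset hlZ (by simpa using hz)
  have hlen : (l ++ [z]).length ≤ Z.card := List.length_le_card_of_toFinset_subset hl' hlZ'
  exact exists_strong_sequence_card_uncovered_le hZ hμν hdom (l ++ [z]) hl' hlZ'
    (List.forall_take_get_append_singleton _ hstrong hzstep)
termination_by Z.card - l.length
decreasing_by simp only [List.length_append, List.length_singleton] at hlen ⊢; omega

end PseudoCover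

theorem stmt7_general {V : Type*} [Fintype V] [DecidableEq V]
    (G : SimpleGraph V) [DecidableRel G.Adj]
    (κ : ℕ) (W Z : Finset V)
    (hZ : Z.card = κ)
    (hdom : ∀ w ∈ W, ∃ z ∈ Z, z = w ∨ G.Adj z w) :
    ∃ l : List V, l.Nodup ∧ l.toFinset = Z ∧
      ∃ m ≤ κ, IsPseudoCover G κ (2 * κ ^ 2) (2 * κ ^ 3) W (l.take m) := by
  have hdom' : ∀ w ∈ W, ∃ z ∈ Z, w ∈ closedNbr G z := fun w hw =>
    (hdom w hw).imp fun z => And.imp_right (mem_closedNbr G).2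
  obtain ⟨l, hl, hlZ, hstrong, hsmall⟩ :=
    exists_strong_sequence_card_uncovered_le hZ.le
      (show κ * (2 * κ ^ 2) ≤ 2 * κ ^ 3 from (by ring : _ = _).le) hdom' [] List.nodup_nil
      (by simp) (fun i => i.elim0)
  obtain ⟨L, hL, hLZ, htake⟩ := List.exists_nodup_toFinset_eq_take_length hl hlZ
  have hlen : l.length ≤ κ := hZ ▸ List.length_le_card_of_toFinset_subset hl hlZ
  refine ⟨L, hL, hLZ, l.length, hlen, ?_⟩
  rw [htake]
  exact ⟨hlen, hstrong, hsmall⟩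

/-- If `W` has at least `ν = 2κ³` elements and `Z` is a set of `κ` vertices
dominating `W`, then the vertices of `Z` can be ordered so that some prefix of
length `m ≤ κ` is a pseudo-cover of `W` with parameters
`κ, λ = 1/κ, μ = 2κ², ν = 2κ³`. -/
theorem stmt7 {V : Type*} [Fintype V] [DecidableEq V]
    (G : SimpleGraph V) [DecidableRel G.Adj]
    (κ : ℕ) (hκ : 0 < κ) (W Z : Finset V)
    (hW : 2 * κ ^ 3 ≤ W.card) (hZ : Z.card = κ)
    (hdom : ∀ w ∈ W, ∃ z ∈ Z, z = w ∨ G.Adj z w) :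
    ∃ l : List V, l.Nodup ∧ l.toFinset = Z ∧
      ∃ m ≤ κ, IsPseudoCover G κ (2 * κ ^ 2) (2 * κ ^ 3) W (l.take m) :=
  stmt7_general G κ W Z hZ hdom
end

section
/- Under the hypotheses of the previous lemma, for every W ⊆ V(G) with |W| ≥ μ, the number of pseudo-covers of W (with parameters κ, λ = 1/κ, μ = 2κ², ν = 2κ³) is less than κ^{2κ}. -/
variable {V : Type*} [Fintype V] [DecidableEq V]

/-- Twice the number of edges of the subgraph of `G` induced on `s`. -/
def pairCount (G : SimpleGraph V) [DecidableRel G.Adj] (s : Finset V) : ℕ :=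
  (Finset.univ.filter fun p : V × V => p.1 ∈ s ∧ p.2 ∈ s ∧ G.Adj p.1 p.2).card

/-!
A pseudo-cover is determined by its successive vertices, and each one must be a `1/κ`-strong
vertex covering at least `2κ²` elements of the part of `W` still uncovered. For any set `U`
there are fewer than `κ²` such vertices `S`: double counting the pairs `(v, u)` with `v ∈ S` and
`u ∈ N[v] ∩ U` gives at least `2κ²|S|` and at least `|S||U|/κ` of them, while the density bound
caps the edges between `S` and `U` at `κ(|S| + |U|)/2`. Hence there are at most
`∑_{m ≤ κ} (κ² - 1)^m < κ^(2κ)` pseudo-covers.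
-/

open Finset

namespace SimpleGraph

lemma card_interedges_eq_sum {α : Type*} (G : SimpleGraph α) [DecidableRel G.Adj]
    (s t : Finset α) : #(G.interedges s t) = ∑ v ∈ s, #{u ∈ t | G.Adj v u} := by
  simp only [interedges_def, card_filter, sum_product]

lemma card_interedges_comm {α : Type*} (G : SimpleGraph α) [DecidableRel G.Adj]
    (s t : Finset α) : #(G.interedges s t) = #(G.interedges t s) :=
  have := G.symm
  Rel.card_interedges_comm s t

lemma two_mul_card_interedges_le {α : Type*} [DecidableEq α] (G : SimpleGraph α)
    [DecidableRel G.Adj] (s t : Finset α) :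
    2 * #(G.interedges s t) ≤
      #(G.interedges (s ∪ t) (s ∪ t)) + #(G.interedges (s ∩ t) (s ∩ t)) := by
  have hunion : G.interedges s t ∪ G.interedges t s ⊆ G.interedges (s ∪ t) (s ∪ t) :=
    union_subset (G.interedges_mono subset_union_left subset_union_right)
      (G.interedges_mono subset_union_right subset_union_left)
  have hinter : G.interedges s t ∩ G.interedges t s ⊆ G.interedges (s ∩ t) (s ∩ t) := by
    intro e
    simp only [mem_inter, mem_interedges_iff]
    tauto
  calc 2 * #(G.interedges s t) = #(G.interedges s t) + #(G.interedges t s) := by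
        rw [card_interedges_comm G t s]; ring
    _ = #(G.interedges s t ∪ G.interedges t s) + #(G.interedges s t ∩ G.interedges t s) :=
        (card_union_add_card_inter _ _).symm
    _ ≤ _ := add_le_add (card_le_card hunion) (card_le_card hinter)

end SimpleGraph

lemma pairCount_eq_card_interedges (G : SimpleGraph V) [DecidableRel G.Adj] (s : Finset V) :
    pairCount G s = #(G.interedges s s) := by
  rw [pairCount, SimpleGraph.interedges_def]
  congr 1
  ext e
  simp [and_assoc]

def strongSet (G : SimpleGraph V) [DecidableRel G.Adj] (κ μ : ℕ) (U : Finset V) : Finset V :=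
  {v | #U ≤ κ * #(closedNbr G v ∩ U) ∧ μ ≤ #(closedNbr G v ∩ U)}

lemma card_closedNbr_inter_le (G : SimpleGraph V) [DecidableRel G.Adj] (v : V) (U : Finset V) :
    #(closedNbr G v ∩ U) ≤ #{u ∈ U | G.Adj v u} + 1 := by
  refine (card_le_card fun u hu => ?_).trans (card_insert_le v _)
  simp only [closedNbr, mem_inter, mem_insert, SimpleGraph.mem_neighborFinset] at hu
  simp only [mem_insert, mem_filter]
  tauto

lemma sum_card_closedNbr_inter_le (G : SimpleGraph V) [DecidableRel G.Adj] (S U : Finset V) :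
    ∑ v ∈ S, #(closedNbr G v ∩ U) ≤ #(G.interedges S U) + #S := by
  rw [G.card_interedges_eq_sum, card_eq_sum_ones S, ← sum_add_distrib]
  exact sum_le_sum fun v _ => card_closedNbr_inter_le G v U

lemma lt_sq_of_double_counting {κ s u p : ℕ} (hκ : 2 ≤ κ) (h1 : s * (2 * κ ^ 2) ≤ p)
    (h2 : s * u ≤ κ * p) (h3 : 2 * p ≤ κ * (s + u) + 2 * s) : s < κ ^ 2 := by
  by_contra! hs
  -- With `s ≥ κ²`, `h2` and `h3` bound `u`, and then `h1` and `h3` are incompatible.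
  have hu : u ≤ κ ^ 2 + 2 * κ := by nlinarith
  have hκs : (κ + 2) * s ≤ 2 * κ ^ 2 * s := Nat.mul_le_mul_right _ (by nlinarith)
  have hmul : κ ^ 2 * (2 * κ ^ 2) ≤ κ ^ 2 * (κ + 2) := by nlinarith
  have hκ' : 2 * κ ^ 2 ≤ κ + 2 := Nat.le_of_mul_le_mul_left hmul (by positivity)
  nlinarith

lemma card_strongSet_lt (G : SimpleGraph V) [DecidableRel G.Adj] {κ : ℕ} (hκ : 2 ≤ κ)
    (hdens : ∀ s : Finset V, pairCount G s ≤ κ * #s) (U : Finset V) :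
    #(strongSet G κ (2 * κ ^ 2) U) < κ ^ 2 := by
  set S := strongSet G κ (2 * κ ^ 2) U
  have hS : ∀ v ∈ S, #U ≤ κ * #(closedNbr G v ∩ U) ∧ 2 * κ ^ 2 ≤ #(closedNbr G v ∩ U) :=
    fun v hv => (mem_filter.mp hv).2
  have hcover : #S * (2 * κ ^ 2) ≤ ∑ v ∈ S, #(closedNbr G v ∩ U) := by
    simpa using card_nsmul_le_sum S _ _ fun v hv => (hS v hv).2
  have hstrong : #S * #U ≤ κ * ∑ v ∈ S, #(closedNbr G v ∩ U) := by
    simpa [mul_sum] using card_nsmul_le_sum S _ _ fun v hv => (hS v hv).1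
  have hedges : 2 * #(G.interedges S U) ≤ κ * (#S + #U) := by
    calc 2 * #(G.interedges S U)
        ≤ pairCount G (S ∪ U) + pairCount G (S ∩ U) := by
          simpa only [pairCount_eq_card_interedges] using G.two_mul_card_interedges_le S U
      _ ≤ κ * #(S ∪ U) + κ * #(S ∩ U) := add_le_add (hdens _) (hdens _)
      _ = κ * (#S + #U) := by rw [← mul_add, card_union_add_card_inter]
  have hsum := sum_card_closedNbr_inter_le G S U
  exact lt_sq_of_double_counting hκ hcover hstrong (by omega)

section AdaptedLists

variable {α : Type*} [DecidableEq α]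

def adaptedLists (F : List α → Finset α) : ℕ → Finset (List α)
  | 0 => {[]}
  | n + 1 => (adaptedLists F n).biUnion fun l => (F l).image fun v => l ++ [v]

lemma mem_adaptedLists {F : List α → Finset α} {l : List α}
    (h : ∀ i : Fin l.length, l.get i ∈ F (l.take i)) : l ∈ adaptedLists F l.length := by
  induction l using List.reverseRecOn with
  | nil => simp [adaptedLists]
  | append_singleton l v ih =>
    have hprefix : ∀ i : Fin l.length, l.get i ∈ F (l.take i) := fun i => by
      simpa [List.getElem_append_left i.2, List.take_append_of_le_length i.2.le]
        using h ⟨i, by simp⟩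
    have hlast : v ∈ F l := by simpa using h ⟨l.length, by simp⟩
    rw [List.length_append, List.length_singleton, adaptedLists]
    exact mem_biUnion.mpr ⟨l, ih hprefix, mem_image_of_mem _ hlast⟩

lemma card_adaptedLists_le {F : List α → Finset α} {c : ℕ} (hF : ∀ l, #(F l) ≤ c) (n : ℕ) :
    #(adaptedLists F n) ≤ c ^ n := by
  induction n with
  | zero => simp [adaptedLists]
  | succ n ih =>
    calc #(adaptedLists F (n + 1))
        ≤ ∑ l ∈ adaptedLists F n, #((F l).image fun v => l ++ [v]) := card_biUnion_le
      _ ≤ ∑ _l ∈ adaptedLists F n, c := sum_le_sum fun l _ => card_image_le.trans (hF l)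
      _ = #(adaptedLists F n) * c := by rw [sum_const, smul_eq_mul]
      _ ≤ c ^ (n + 1) := by rw [pow_succ]; exact Nat.mul_le_mul_right _ ih

lemma finite_and_ncard_le_of_forall_adapted {F : List α → Finset α} {c n : ℕ}
    (hF : ∀ l, #(F l) ≤ c) {A : Set (List α)}
    (hA : ∀ l ∈ A, l.length ≤ n ∧ ∀ i : Fin l.length, l.get i ∈ F (l.take i)) :
    A.Finite ∧ A.ncard ≤ ∑ m ∈ range (n + 1), c ^ m := by
  have hsub : A ⊆ ((range (n + 1)).biUnion (adaptedLists F) : Finset (List α)) := fun l hl =>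
    mem_biUnion.mpr ⟨l.length, mem_range.mpr (Nat.lt_succ_of_le (hA l hl).1),
      mem_adaptedLists (hA l hl).2⟩
  refine ⟨(finite_toSet _).subset hsub, ?_⟩
  calc A.ncard ≤ #((range (n + 1)).biUnion (adaptedLists F)) :=
        (Set.ncard_le_ncard hsub (finite_toSet _)).trans_eq (Set.ncard_coe_finset _)
    _ ≤ ∑ m ∈ range (n + 1), #(adaptedLists F m) := card_biUnion_le
    _ ≤ ∑ m ∈ range (n + 1), c ^ m := sum_le_sum fun m _ => card_adaptedLists_le hF m

end AdaptedLists

lemma sum_range_pow_lt_add_one_pow {r n : ℕ} (hr : 1 ≤ r) (hn : 2 ≤ n) :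
    ∑ m ∈ range (n + 1), r ^ m < (r + 1) ^ n := by
  -- `(r + 1)^n = ∑ C(n, m) r^m`: every term dominates `r^m`, and the `m = 1` term does strictly.
  rw [add_pow]
  refine sum_lt_sum (fun m hm => ?_) ⟨1, by simp; omega, by simp; nlinarith⟩
  simp only [one_pow, mul_one]
  exact Nat.le_mul_of_pos_right _ (Nat.choose_pos (Nat.lt_succ_iff.mp (mem_range.mp hm)))

theorem stmt9_general {V : Type*} [Fintype V] [DecidableEq V]
    (G : SimpleGraph V) [DecidableRel G.Adj]
    (nab0 nab κ : ℕ) (hpos : 0 < nab0)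
    (hκ : κ = max (2 * nab0) (2 * nab))
    (hdens : ∀ s : Finset V, pairCount G s ≤ 2 * nab0 * s.card)
    (W : Finset V) :
    {l : List V | IsPseudoCover G κ (2 * κ ^ 2) (2 * κ ^ 3) W l}.Finite ∧
    {l : List V | IsPseudoCover G κ (2 * κ ^ 2) (2 * κ ^ 3) W l}.ncard
      < κ ^ (2 * κ) := by
  have hnab0 : 2 * nab0 ≤ κ := hκ ▸ le_max_left _ _
  have hκ2 : 2 ≤ κ := by omega
  have hstrong : ∀ l, #(strongSet G κ (2 * κ ^ 2) (uncovered G W l)) ≤ κ ^ 2 - 1 := fun l =>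
    Nat.le_sub_one_of_lt <| card_strongSet_lt G hκ2
      (fun s => (hdens s).trans (Nat.mul_le_mul_right _ hnab0)) _
  obtain ⟨hfin, hcard⟩ := finite_and_ncard_le_of_forall_adapted hstrong
    (A := {l : List V | IsPseudoCover G κ (2 * κ ^ 2) (2 * κ ^ 3) W l})
    fun l ⟨hlen, hsteps, _⟩ => ⟨hlen, fun i => mem_filter.mpr ⟨mem_univ _, hsteps i⟩⟩
  refine ⟨hfin, hcard.trans_lt ?_⟩
  calc ∑ m ∈ range (κ + 1), (κ ^ 2 - 1) ^ m < (κ ^ 2 - 1 + 1) ^ κ :=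
        sum_range_pow_lt_add_one_pow (Nat.le_sub_one_of_lt (by nlinarith)) hκ2
    _ = κ ^ (2 * κ) := by rw [Nat.sub_add_cancel (by nlinarith), pow_mul]

/-- Under the density hypotheses (`∇₀(G) ≤ ∇₀ ≤ ∇`, `κ = max(2∇₀,2∇)`), for
every `W` with `|W| ≥ μ = 2κ²`, the set of pseudo-covers of `W` (parameters
`κ, λ = 1/κ, μ = 2κ², ν = 2κ³`) is finite of size less than `κ^(2κ)`. -/
theorem stmt9 {V : Type*} [Fintype V] [DecidableEq V]
    (G : SimpleGraph V) [DecidableRel G.Adj]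
    (nab0 nab κ : ℕ) (hpos : 0 < nab0) (h0 : nab0 ≤ nab)
    (hκ : κ = max (2 * nab0) (2 * nab))
    (hdens : ∀ s : Finset V, pairCount G s ≤ 2 * nab0 * s.card)
    (W : Finset V) (hW : 2 * κ ^ 2 ≤ W.card) :
    {l : List V | IsPseudoCover G κ (2 * κ ^ 2) (2 * κ ^ 3) W l}.Finite ∧
    {l : List V | IsPseudoCover G κ (2 * κ ^ 2) (2 * κ ^ 3) W l}.ncard
      < κ ^ (2 * κ) :=
  stmt9_general G nab0 nab κ hpos hκ hdens W
end

section
/- Let G be a graph admitting an orientation with maximum out-degree d, let R ⊆ V(G), and let (x_v)_{v∈V(G)} be a feasible fractional solution of the R-dominating set LP (x_v ∈ [0,1] and ∑_{u∈N[v]} x_u ≥ 1 for all v ∈ R). Let H = {v : x_v ≥ 1/(2d+1)} and U = {v ∈ R : v ∉ N[H]}. Then H ∪ U dominates R and |H ∪ U| ≤ (2d+1)·∑_{v∈V(G)} x_v. -/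
variable {V : Type*} [Fintype V] [DecidableEq V]

/-- The rounded-up part of an LP solution: vertices with `x_v ≥ 1/(2d+1)`. -/
def lpH (x : V → ℝ) (d : ℕ) : Set V := {w | 1 / (2 * (d : ℝ) + 1) ≤ x w}

/-- The vertices of `R` not dominated by `lpH x d`. -/
def lpU (G : SimpleGraph V) (R : Set V) (x : V → ℝ) (d : ℕ) : Set V :=
  {w ∈ R | ∀ z ∈ lpH x d, ¬ (z = w ∨ G.Adj z w)}

/-- LP rounding (Bansal–Umboh style): if `G` has an orientation `r` with maximum
out-degree `d` and `x` is a feasible fractional solution of the `R`-dominating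
set LP, then `H ∪ U` dominates `R` and `|H ∪ U| ≤ (2d+1)·∑_v x_v`, where
`H = {v : x_v ≥ 1/(2d+1)}` and `U = {v ∈ R : v ∉ N[H]}`. -/
theorem stmt11 (G : SimpleGraph V) [DecidableRel G.Adj]
    (d : ℕ) (r : V → V → Prop)
    (hor : ∀ u w, G.Adj u w ↔ (r u w ∨ r w u))
    (hanti : ∀ u w, r u w → ¬ r w u)
    (hout : ∀ u, {w | r u w}.ncard ≤ d)
    (R : Set V) (x : V → ℝ)
    (h01 : ∀ u, 0 ≤ x u ∧ x u ≤ 1)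
    (hfeas : ∀ u ∈ R, 1 ≤ ∑ w ∈ closedNbr G u, x w) :
    (∀ u ∈ R, ∃ z ∈ lpH x d ∪ lpU G R x d, z = u ∨ G.Adj z u) ∧
    (((lpH x d ∪ lpU G R x d).ncard : ℝ) ≤ (2 * d + 1) * ∑ w : V, x w) := by
  classical
  constructor
  · intro u hu
    by_cases h : ∃ z ∈ lpH x d, z = u ∨ G.Adj z u
    · obtain ⟨z, hz, hzu⟩ := h; exact ⟨z, Or.inl hz, hzu⟩
    · push_neg at h
      exact ⟨u, Or.inr ⟨hu, fun z hz => not_or.mpr (h z hz)⟩, Or.inl rfl⟩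
  · have hc : (0:ℝ) < 2 * (d:ℝ) + 1 := by positivity
    set c : ℝ := 1 / (2 * (d:ℝ) + 1) with hcdef
    have hcpos : 0 < c := by positivity
    set Hf : Finset V := Finset.univ.filter (fun w => c ≤ x w) with hHf
    set Uf : Finset V := Finset.univ.filter (fun w => w ∈ lpU G R x d) with hUf
    -- identify the set union with the finset union
    have hsetH : lpH x d = ↑Hf := by
      ext w; simp [lpH, hHf, hcdef]
    have hsetU : lpU G R x d = ↑Uf := by
      ext w; simp [hUf]
    have hcard : ((lpH x d ∪ lpU G R x d).ncard : ℝ) ≤ (Hf.card : ℝ) + Uf.card := by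
      rw [hsetH, hsetU, ← Finset.coe_union, Set.ncard_coe_finset]
      exact_mod_cast Finset.card_union_le _ _
    -- out-degree as finset card
    have houtf : ∀ w, (Finset.univ.filter (fun u => r w u)).card ≤ d := by
      intro w
      have : {u | r w u} = ↑(Finset.univ.filter (fun u => r w u)) := by ext u; simp
      have h2 := hout w
      rwa [this, Set.ncard_coe_finset] at h2
    -- facts about members of Uf
    have hUfacts : ∀ u ∈ Uf, u ∈ R ∧ ∀ z, c ≤ x z → ¬ (z = u ∨ G.Adj z u) := by
      intro u hu
      rw [hUf, Finset.mem_filter] at hu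
      obtain ⟨-, huR, hz⟩ := hu
      exact ⟨huR, fun z hzc => hz z hzc⟩
    -- Bound A : card of Hf
    have hone : (2 * (d:ℝ) + 1) * c = 1 := by
      rw [hcdef]; field_simp
    have hA : (Hf.card : ℝ) ≤ (2 * d + 1) * ∑ w ∈ Hf, x w := by
      have h1 := Finset.card_nsmul_le_sum Hf x c (fun w hw => by
        rw [hHf, Finset.mem_filter] at hw; exact hw.2)
      rw [nsmul_eq_mul] at h1
      have h2 := mul_le_mul_of_nonneg_left h1 hc.le
      calc (Hf.card : ℝ) = (2*(d:ℝ)+1) * ((Hf.card:ℝ) * c) := by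
            rw [mul_comm ((Hf.card:ℝ)) c, ← mul_assoc, hone, one_mul]
        _ ≤ _ := h2
    have hx0 : ∀ w, 0 ≤ x w := fun w => (h01 w).1
    set insum : V → ℝ := fun u => ∑ w ∈ Finset.univ.filter (fun w => r w u), x w with hinsum
    -- Claim L : lower bound on the in-neighbor mass of each undominated vertex
    have hL : ∀ u ∈ Uf, (d:ℝ) * c ≤ insum u := by
      intro u hu
      obtain ⟨huR, hund⟩ := hUfacts u hu
      have hxuc : x u ≤ c := by
        by_contra h; push_neg at h
        exact hund u h.le (Or.inl rfl)
      have hfe := hfeas u huR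
      have hself : u ∉ G.neighborFinset u := by simp
      rw [closedNbr, Finset.sum_insert hself] at hfe
      have hsplit : ∑ w ∈ G.neighborFinset u, x w
          = ∑ w ∈ (G.neighborFinset u).filter (fun w => r u w), x w
            + ∑ w ∈ (G.neighborFinset u).filter (fun w => ¬ r u w), x w :=
        (Finset.sum_filter_add_sum_filter_not _ _ _).symm
      have hinn : (G.neighborFinset u).filter (fun w => ¬ r u w)
          = Finset.univ.filter (fun w => r w u) := by
        ext w
        simp only [Finset.mem_filter, SimpleGraph.mem_neighborFinset, Finset.mem_univ, true_and]
        constructor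
        · rintro ⟨hadj, hnr⟩
          rcases (hor u w).1 hadj with h | h
          · exact absurd h hnr
          · exact h
        · intro hr
          exact ⟨(hor u w).2 (Or.inr hr), hanti w u hr⟩
      have hout1 : ∑ w ∈ (G.neighborFinset u).filter (fun w => r u w), x w ≤ (d:ℝ) * c := by
        have hcard : ((G.neighborFinset u).filter (fun w => r u w)).card ≤ d := by
          refine le_trans (Finset.card_le_card ?_) (houtf u)
          intro w hw
          simp only [Finset.mem_filter, Finset.mem_univ, true_and] at hw ⊢
          exact hw.2
        have hbd : ∀ w ∈ (G.neighborFinset u).filter (fun w => r u w), x w ≤ c := by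
          intro w hw
          simp only [Finset.mem_filter, SimpleGraph.mem_neighborFinset] at hw
          by_contra h; push_neg at h
          exact hund w h.le (Or.inr hw.1.symm)
        have h1 := Finset.sum_le_card_nsmul _ _ c hbd
        rw [nsmul_eq_mul] at h1
        refine h1.trans ?_
        exact mul_le_mul_of_nonneg_right (by exact_mod_cast hcard) hcpos.le
      rw [hsplit, hinn] at hfe
      have h2d : 1 - ((d:ℝ) + 1) * c = (d:ℝ) * c := by
        have : (2*(d:ℝ)+1) * c = 1 := hone
        nlinarith [this]
      have : (d:ℝ) * c ≤ ∑ w ∈ Finset.univ.filter (fun w => r w u), x w := by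
        nlinarith [hfe, hxuc, hout1]
      simpa [hinsum] using this
    -- Claim M : total in-neighbor mass is at most d times the light mass
    have hM : ∑ u ∈ Uf, insum u
        ≤ (d:ℝ) * ∑ w ∈ Finset.univ.filter (fun w => ¬ c ≤ x w), x w := by
      have hswap : ∑ u ∈ Uf, insum u
          = ∑ w : V, ((Uf.filter (fun u => r w u)).card : ℝ) * x w := by
        calc ∑ u ∈ Uf, insum u
            = ∑ u ∈ Uf, ∑ w : V, if r w u then x w else 0 := by
              refine Finset.sum_congr rfl fun u _ => ?_
              rw [hinsum]; exact (Finset.sum_filter _ _)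
          _ = ∑ w : V, ∑ u ∈ Uf, if r w u then x w else 0 := Finset.sum_comm
          _ = ∑ w : V, ((Uf.filter (fun u => r w u)).card : ℝ) * x w := by
              refine Finset.sum_congr rfl fun w _ => ?_
              rw [← Finset.sum_filter, Finset.sum_const, nsmul_eq_mul]
      rw [hswap]
      rw [← Finset.sum_filter_add_sum_filter_not Finset.univ (fun w => c ≤ x w)
        (fun w => ((Uf.filter (fun u => r w u)).card : ℝ) * x w)]
      have hzero : ∑ w ∈ Finset.univ.filter (fun w => c ≤ x w),
          ((Uf.filter (fun u => r w u)).card : ℝ) * x w = 0 := by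
        refine Finset.sum_eq_zero fun w hw => ?_
        simp only [Finset.mem_filter, Finset.mem_univ, true_and] at hw
        have : Uf.filter (fun u => r w u) = ∅ := by
          rw [Finset.eq_empty_iff_forall_notMem]
          intro u hu2
          simp only [Finset.mem_filter] at hu2
          exact (hUfacts u hu2.1).2 w hw (Or.inr ((hor w u).2 (Or.inl hu2.2)))
        rw [this]; simp
      rw [hzero, zero_add, Finset.mul_sum]
      refine Finset.sum_le_sum fun w hw => ?_
      refine mul_le_mul_of_nonneg_right ?_ (hx0 w)
      have : (Uf.filter (fun u => r w u)).card ≤ d := by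
        refine le_trans (Finset.card_le_card ?_) (houtf w)
        intro u hu2
        simp only [Finset.mem_filter, Finset.mem_univ, true_and] at hu2 ⊢
        exact hu2.2
      exact_mod_cast this
    -- Bound B
    have hB : (Uf.card : ℝ)
        ≤ (2*d+1) * ∑ w ∈ Finset.univ.filter (fun w => ¬ c ≤ x w), x w := by
      have hS2 : 0 ≤ ∑ w ∈ Finset.univ.filter (fun w => ¬ c ≤ x w), x w :=
        Finset.sum_nonneg fun w _ => hx0 w
      rcases Nat.eq_zero_or_pos d with hd | hd
      · have hUe : Uf = ∅ := by
          rw [Finset.eq_empty_iff_forall_notMem]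
          intro u hu
          obtain ⟨huR, hund⟩ := hUfacts u hu
          have hnor : ∀ a b, ¬ r a b := by
            intro a b hab
            have hset : {w | r a w} = ∅ :=
              (Set.ncard_eq_zero (Set.toFinite _)).mp
                (Nat.le_zero.mp (by simpa [hd] using hout a))
            have : b ∈ ({w | r a w} : Set V) := hab
            rw [hset] at this
            exact this
          have hnb : G.neighborFinset u = ∅ := by
            ext w
            simp only [SimpleGraph.mem_neighborFinset, Finset.notMem_empty, iff_false]
            intro hadj
            rcases (hor u w).1 hadj with h | h
            · exact hnor u w h
            · exact hnor w u h
          have hfe := hfeas u huR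
          rw [closedNbr, hnb, Finset.sum_insert (Finset.notMem_empty u),
            Finset.sum_empty, add_zero] at hfe
          have : c ≤ x u := by
            rw [hcdef, hd]
            simpa using hfe
          exact hund u this (Or.inl rfl)
        rw [hUe]
        simp only [Finset.card_empty, Nat.cast_zero]
        positivity
      · have h1 := Finset.card_nsmul_le_sum Uf insum ((d:ℝ) * c) hL
        rw [nsmul_eq_mul] at h1
        have h2 : (Uf.card : ℝ) * ((d:ℝ) * c)
            ≤ (d:ℝ) * ∑ w ∈ Finset.univ.filter (fun w => ¬ c ≤ x w), x w := h1.trans hM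
        have hd' : (0:ℝ) < d := by exact_mod_cast hd
        have h3 : (Uf.card : ℝ) * c
            ≤ ∑ w ∈ Finset.univ.filter (fun w => ¬ c ≤ x w), x w := by
          rw [show (Uf.card : ℝ) * ((d:ℝ) * c) = (d:ℝ) * ((Uf.card:ℝ) * c) by ring] at h2
          exact le_of_mul_le_mul_left h2 hd'
        have h4 := mul_le_mul_of_nonneg_left h3 hc.le
        calc (Uf.card : ℝ) = (2*(d:ℝ)+1) * ((Uf.card:ℝ) * c) := by
              rw [mul_comm ((Uf.card:ℝ)) c, ← mul_assoc, hone, one_mul]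
          _ ≤ _ := h4
    -- combine
    refine hcard.trans ?_
    calc (Hf.card : ℝ) + Uf.card
        ≤ (2*d+1) * ∑ w ∈ Hf, x w
          + (2*d+1) * ∑ w ∈ Finset.univ.filter (fun w => ¬ c ≤ x w), x w := add_le_add hA hB
      _ = (2*d+1) * ∑ w : V, x w := by
          rw [← mul_add, hHf,
            Finset.sum_filter_add_sum_filter_not Finset.univ (fun w => c ≤ x w) x]
end

section
/- Let d, ∇₀, Δ be positive integers with Δ ≥ 3∇₀, and let real sequences (r_i)_{0≤i≤Δ}, (d_i)_{0≤i≤Δ} satisfy d_i ≥ 0, ∑_{j≤i} d_j ≤ r_i for all i, r_i ≤ i+1 for all i, and d_i ≤ (∇₀/(i − 2∇₀))(r_i − r_{i−1}) for all 2∇₀ < i ≤ Δ. Then ∑_{i=0}^{Δ} d_i ≤ 3∇₀ + 1 + ∇₀·(H_{Δ−2∇₀} − H_{∇₀}), where H_n denotes the n-th harmonic number. -/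
/-- The `n`-th harmonic number `H_n = 1 + 1/2 + ⋯ + 1/n` as a real number. -/
noncomputable def harmonicR (n : ℕ) : ℝ := ∑ i ∈ Finset.range n, (1 : ℝ) / (i + 1)

lemma harm_sum (n0 : ℕ) (h : 0 < n0) : ∀ m, 3 * n0 ≤ m →
    ∑ k ∈ Finset.Ioc (3 * n0) m, (n0 : ℝ) / ((k : ℝ) - 2 * n0)
      = n0 * (harmonicR (m - 2 * n0) - harmonicR n0) := by
  intro m hm
  induction m, hm using Nat.le_induction with
  | base =>
    have : 3 * n0 - 2 * n0 = n0 := by omega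
    simp [this]
  | succ m hm ih =>
    rw [Finset.sum_Ioc_succ_top (by omega), ih]
    have h1 : m + 1 - 2 * n0 = (m - 2 * n0) + 1 := by omega
    have h2 : ((m - 2 * n0 : ℕ) : ℝ) = (m : ℝ) - 2 * n0 := by
      push_cast [Nat.cast_sub (by omega : 2 * n0 ≤ m)]; ring
    rw [h1]
    simp only [harmonicR, Finset.sum_range_succ]
    rw [h2]
    push_cast
    ring

/-- The optimization underlying the analysis of the greedy distributed
dominating set algorithm: if `Δ ≥ 3∇₀` and the sequences `(r_i)`, `(d_i)`
satisfy `d_i ≥ 0`, `∑_{j ≤ i} d_j ≤ r_i`, `r_i ≤ i + 1`, and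
`d_i ≤ (∇₀/(i - 2∇₀))·(r_i - r_{i-1})` for `2∇₀ < i ≤ Δ`, then
`∑_{i=0}^{Δ} d_i ≤ 3∇₀ + 1 + ∇₀·(H_{Δ-2∇₀} - H_{∇₀})`. -/
theorem stmt14 (nab0 Δ : ℕ) (hpos : 0 < nab0) (hΔ : 3 * nab0 ≤ Δ)
    (r d : ℕ → ℝ)
    (hd : ∀ i ≤ Δ, 0 ≤ d i)
    (h1 : ∀ i ≤ Δ, ∑ j ∈ Finset.range (i + 1), d j ≤ r i)
    (h2 : ∀ i ≤ Δ, r i ≤ (i : ℝ) + 1)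
    (h3 : ∀ i, 2 * nab0 < i → i ≤ Δ →
      d i ≤ ((nab0 : ℝ) / ((i : ℝ) - 2 * nab0)) * (r i - r (i - 1))) :
    ∑ i ∈ Finset.range (Δ + 1), d i
      ≤ 3 * (nab0 : ℝ) + 1 + nab0 * (harmonicR (Δ - 2 * nab0) - harmonicR nab0) := by
  set c : ℕ → ℝ := fun k => (nab0 : ℝ) / ((k : ℝ) - 2 * nab0) with hc
  -- positivity of denominators for k ≥ 3 nab0
  have hden : ∀ k : ℕ, 3 * nab0 ≤ k → (0 : ℝ) < (k : ℝ) - 2 * nab0 := by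
    intro k hk
    have : (2 * nab0 : ℕ) < k := by omega
    have := (Nat.cast_lt (α := ℝ)).2 this
    push_cast at this ⊢
    linarith
  have hcnonneg : ∀ k : ℕ, 3 * nab0 ≤ k → (0 : ℝ) ≤ c k := by
    intro k hk
    exact div_nonneg (by positivity) (le_of_lt (hden k hk))
  have hcmono : ∀ k : ℕ, 3 * nab0 ≤ k → c (k + 1) ≤ c k := by
    intro k hk
    apply div_le_div_of_nonneg_left (by positivity) (hden k hk)
    push_cast
    linarith
  -- main invariant
  have key : ∀ m, 3 * nab0 ≤ m → m ≤ Δ →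
      ∑ i ∈ Finset.range (m + 1), d i + c m * ((m : ℝ) + 1 - r m)
        ≤ (3 * nab0 : ℝ) + 1 + ∑ k ∈ Finset.Ioc (3 * nab0) m, c k := by
    intro m hm
    induction m, hm using Nat.le_induction with
    | base =>
      intro hle
      have hca : c (3 * nab0) = 1 := by
        simp only [hc]
        rw [div_eq_one_iff_eq (ne_of_gt (hden _ le_rfl))]
        push_cast; ring
      have := h1 (3 * nab0) hle
      simp only [Finset.Ioc_self, Finset.sum_empty, hca]
      push_cast
      linarith
    | succ m hm ih =>
      intro hle
      have hmΔ : m ≤ Δ := by omega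
      have ih' := ih hmΔ
      have hd3 := h3 (m + 1) (by omega) hle
      simp only [Nat.add_sub_cancel] at hd3
      rw [Finset.sum_range_succ, Finset.sum_Ioc_succ_top (by omega)]
      have hr : r m ≤ (m : ℝ) + 1 := h2 m hmΔ
      have hmono := hcmono m hm
      have hnn := hcnonneg (m + 1) (by omega)
      -- d (m+1) ≤ c (m+1) * (r (m+1) - r m)
      have step : d (m + 1) ≤ c (m + 1) * (r (m + 1) - r m) := hd3
      have hq : c (m + 1) * (((m : ℝ) + 1) - r m) ≤ c m * (((m : ℝ) + 1) - r m) :=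
        mul_le_mul_of_nonneg_right hmono (by linarith)
      push_cast
      push_cast at ih'
      nlinarith [ih', step, hq]
  have kfinal := key Δ hΔ le_rfl
  rw [harm_sum nab0 hpos Δ hΔ] at kfinal
  have hrΔ : r Δ ≤ (Δ : ℝ) + 1 := h2 Δ le_rfl
  have hnn := hcnonneg Δ hΔ
  have : (0 : ℝ) ≤ c Δ * ((Δ : ℝ) + 1 - r Δ) := mul_nonneg hnn (by linarith)
  push_cast at kfinal ⊢
  linarith
end

section
/- Let G be a K_{3,3}-free triangle-free graph, v a vertex, R ⊆ V(G), and suppose N_R(v) := N(v) ∩ R is dominated by a set A_v of at most 3 vertices not containing v. Then every vertex z ∉ {v} ∪ A_v satisfies |N_R(v) ∩ N_R(z)| ≤ 6. -/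
/-!
Every common neighbour of `v` and `z` in `R` is dominated by one of the at most three vertices
`a ∈ A`, so it suffices that each closed neighbourhood `N[a]` contains at most two common
neighbours of `v` and `z`. If `a` is itself adjacent to `v`, triangle-freeness leaves only `a`
in `N[a] ∩ N(v)`; otherwise three common neighbours of `v`, `z`, `a` would span a `K_{3,3}`.
-/

namespace SimpleGraph

variable {V : Type*} [Fintype V] [DecidableEq V] {G : SimpleGraph V} [DecidableRel G.Adj]

lemma card_neighborFinset_inter_inter_le_two
    (h33 : ¬ ∃ (A B : Finset V), A.card = 3 ∧ B.card = 3 ∧ Disjoint A B ∧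
      ∀ a ∈ A, ∀ b ∈ B, G.Adj a b)
    {x y u : V} (hxy : x ≠ y) (hxu : x ≠ u) (hyu : y ≠ u) :
    (G.neighborFinset x ∩ G.neighborFinset y ∩ G.neighborFinset u).card ≤ 2 := by
  by_contra! hcard
  obtain ⟨B, hBsub, hB⟩ := Finset.exists_subset_card_eq (n := 3) hcard
  have hadj : ∀ a ∈ ({x, y, u} : Finset V), ∀ b ∈ B, G.Adj a b := by
    intro a ha b hb
    have := hBsub hb
    simp only [Finset.mem_inter, mem_neighborFinset] at this
    simp only [Finset.mem_insert, Finset.mem_singleton] at ha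
    rcases ha with rfl | rfl | rfl <;> tauto
  refine h33 ⟨{x, y, u}, B, Finset.card_eq_three.mpr ⟨x, y, u, hxy, hxu, hyu, rfl⟩, hB,
    Finset.disjoint_left.mpr fun a ha haB => G.irrefl (hadj a ha a haB), hadj⟩

lemma insert_inter_neighborFinset_subset_singleton (htf : G.CliqueFree 3) {v a : V}
    (hva : G.Adj v a) :
    insert a (G.neighborFinset a) ∩ G.neighborFinset v ⊆ {a} := by
  intro w hw
  simp only [Finset.mem_inter, Finset.mem_insert, mem_neighborFinset] at hw
  obtain ⟨rfl | haw, hvw⟩ := hw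
  · exact Finset.mem_singleton_self w
  · exact (htf {v, a, w} (is3Clique_triple_iff.mpr ⟨hva, hvw, haw⟩)).elim

lemma card_insert_inter_commonNeighbors_le_two
    (h33 : ¬ ∃ (A B : Finset V), A.card = 3 ∧ B.card = 3 ∧ Disjoint A B ∧
      ∀ a ∈ A, ∀ b ∈ B, G.Adj a b)
    (htf : G.CliqueFree 3) {v z a : V} (hzv : z ≠ v) (hav : a ≠ v) (haz : a ≠ z) :
    (insert a (G.neighborFinset a) ∩ (G.neighborFinset v ∩ G.neighborFinset z)).card ≤ 2 := by
  by_cases hva : G.Adj v a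
  · calc _ ≤ ({a} : Finset V).card := Finset.card_le_card <|
          (Finset.inter_subset_inter_left Finset.inter_subset_left).trans
            (insert_inter_neighborFinset_subset_singleton htf hva)
      _ ≤ 2 := by simp
  · have hsub : insert a (G.neighborFinset a) ∩ (G.neighborFinset v ∩ G.neighborFinset z) ⊆
        G.neighborFinset v ∩ G.neighborFinset z ∩ G.neighborFinset a := by
      intro w hw
      simp only [Finset.mem_inter, Finset.mem_insert, mem_neighborFinset] at hw ⊢
      obtain ⟨rfl | haw, hvw, hzw⟩ := hw
      · exact absurd hvw hva
      · exact ⟨⟨hvw, hzw⟩, haw⟩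
    exact (Finset.card_le_card hsub).trans
      (card_neighborFinset_inter_inter_le_two h33 hzv.symm hav.symm haz.symm)

end SimpleGraph

open SimpleGraph in
/-- In a `K_{3,3}`-free triangle-free graph, if the residual neighborhood
`N_R(v) = N(v) ∩ R` of a vertex `v` is dominated by a set `A` of at most 3
vertices not containing `v`, then every vertex `z ∉ {v} ∪ A` shares at most 6
residual neighbors with `v`. -/
theorem stmt16 {V : Type*} [Fintype V] [DecidableEq V]
    (G : SimpleGraph V) [DecidableRel G.Adj]
    (h33 : ¬ ∃ (A B : Finset V), A.card = 3 ∧ B.card = 3 ∧ Disjoint A B ∧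
      ∀ a ∈ A, ∀ b ∈ B, G.Adj a b)
    (htf : G.CliqueFree 3)
    (R : Finset V) (v : V) (A : Finset V) (hA : A.card ≤ 3) (hvA : v ∉ A)
    (hdom : ∀ w ∈ G.neighborFinset v ∩ R, ∃ a ∈ A, a = w ∨ G.Adj a w)
    (z : V) (hzv : z ≠ v) (hzA : z ∉ A) :
    ((G.neighborFinset v ∩ R) ∩ (G.neighborFinset z ∩ R)).card ≤ 6 := by
  set C := G.neighborFinset v ∩ G.neighborFinset z
  have hcover : (G.neighborFinset v ∩ R) ∩ (G.neighborFinset z ∩ R) ⊆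
      A.biUnion fun a => insert a (G.neighborFinset a) ∩ C := by
    intro w hw
    obtain ⟨a, ha, haw⟩ := hdom w (Finset.mem_inter.mp hw).1
    simp only [C, Finset.mem_biUnion, Finset.mem_inter, Finset.mem_insert,
      mem_neighborFinset] at hw ⊢
    exact ⟨a, ha, haw.imp Eq.symm id, hw.1.1, hw.2.1⟩
  calc _ ≤ _ := Finset.card_le_card hcover
    _ ≤ A.card * 2 := Finset.card_biUnion_le_card_mul _ _ _ fun a ha =>
        card_insert_inter_commonNeighbors_le_two h33 htf hzv
          (ne_of_mem_of_not_mem ha hvA) (ne_of_mem_of_not_mem ha hzA)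
    _ ≤ 6 := by omega
end
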